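/- arXiv:2412.14068 — 2 statements merged into one kernel-verified Lean document; each statement's English description precedes it below -/
import Mathlib

section
/- Let S be a semigroupoid, β = ((ₛY)_{s∈S},(β_s)_{s∈S}) a global action of S on a set Y, and X ⊆ Y a subset. For each s ∈ S define ₛX = {x ∈ X ∩ ₛY : β_s(x) ∈ X} = β_s⁻¹(X ∩ Y_s) ∩ X and α_s = β_s|_{ₛX} : ₛX → β_s(ₛX). Then α = ((ₛX)_{s∈S},(α_s)_{s∈S}) is a partial action of S on X (called the restriction of β to X). -/
universe u v w

/-- An (Exel) semigroupoid: a set `S` with a set of composable pairs (encoded by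
the relation `comp`) and a multiplication, associative in Exel's sense. -/
structure Semigroupoid (S : Type u) where
  comp : S → S → Prop
  mul : S → S → S
  assoc : ∀ s t r : S,
    ((comp s t ∧ comp t r) ∨ (comp s t ∧ comp (mul s t) r) ∨ (comp t r ∧ comp s (mul t r))) →
      comp s t ∧ comp t r ∧ comp (mul s t) r ∧ comp s (mul t r) ∧
        mul (mul s t) r = mul s (mul t r)

namespace Semigroupoid

variable {S : Type u} {X : Type v}

/-- `S^s = {t | (s,t) ∈ S⁽²⁾}`. -/
def rightComp (G : Semigroupoid S) (s : S) : Set S := {t | G.comp s t}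

/-- `X_s = α_s(ₛX)`. -/
def img (dom : S → Set X) (act : S → X → X) (s : S) : Set X := act s '' dom s

/-- Condition (P1): `α_t⁻¹(ₛX ∩ X_t) = ₜX ∩ ₛₜX` for composable `(s,t)`. -/
def P1 (G : Semigroupoid S) (dom : S → Set X) (act : S → X → X) : Prop :=
  ∀ s t : S, G.comp s t →
    {x | x ∈ dom t ∧ act t x ∈ dom s ∩ img dom act t} = dom t ∩ dom (G.mul s t)

/-- Condition (P2): `α_s ∘ α_t = α_{st}` on `ₜX ∩ ₛₜX` for composable `(s,t)`. -/
def P2 (G : Semigroupoid S) (dom : S → Set X) (act : S → X → X) : Prop :=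
  ∀ s t : S, G.comp s t → ∀ x ∈ dom t ∩ dom (G.mul s t),
    act s (act t x) = act (G.mul s t) x

/-- A partial action of the semigroupoid on `X`. -/
def IsPartialAction (G : Semigroupoid S) (dom : S → Set X) (act : S → X → X) : Prop :=
  P1 G dom act ∧ P2 G dom act

/-- Condition (G1): if `S^s = S^t ≠ ∅` then `ₛX = ₜX`. -/
def G1 (G : Semigroupoid S) (dom : S → Set X) : Prop :=
  ∀ s t : S, G.rightComp s = G.rightComp t → (G.rightComp s).Nonempty → dom s = dom t

/-- Condition (G2): if `(s,t) ∈ S⁽²⁾` then `ₜX = ₛₜX`. -/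
def G2 (G : Semigroupoid S) (dom : S → Set X) : Prop :=
  ∀ s t : S, G.comp s t → dom t = dom (G.mul s t)

/-- A global action of the semigroupoid on `X`. -/
def IsGlobalAction (G : Semigroupoid S) (dom : S → Set X) (act : S → X → X) : Prop :=
  IsPartialAction G dom act ∧ G1 G dom ∧ G2 G dom

/-- A partial action is non-degenerate when `X = ⋃ₛ (ₛX ∪ X_s)`. -/
def Nondegenerate (G : Semigroupoid S) (dom : S → Set X) (act : S → X → X) : Prop :=
  (⋃ s : S, dom s ∪ img dom act s) = Set.univ

section Morphisms

variable {Y : Type w}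

/-- A morphism of partial actions `φ : (α,X) → (β,Y)`. -/
def IsMorphism (G : Semigroupoid S) (domX : S → Set X) (actX : S → X → X)
    (domY : S → Set Y) (actY : S → Y → Y) (φ : X → Y) : Prop :=
  ∀ s : S, (∀ x ∈ domX s, φ x ∈ domY s) ∧ (∀ x ∈ domX s, φ (actX s x) = actY s (φ x))

/-- An embedding of partial actions. -/
def IsEmbedding (G : Semigroupoid S) (domX : S → Set X) (actX : S → X → X)
    (domY : S → Set Y) (actY : S → Y → Y) (φ : X → Y) : Prop :=
  Function.Injective φ ∧ IsMorphism G domX actX domY actY φ ∧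
    ∀ s : S, domX s = {x | φ x ∈ domY s ∧ actY s (φ x) ∈ Set.range φ}

end Morphisms

/-- The relation `∼` on `S`: `s ∼ t` iff `s = t`, or `S^s = S^t ≠ ∅`, or `s = ut`. -/
def simRel (G : Semigroupoid S) (s t : S) : Prop :=
  s = t ∨ (G.rightComp s = G.rightComp t ∧ (G.rightComp s).Nonempty) ∨
    ∃ u : S, G.comp u t ∧ s = G.mul u t

/-- `R`: the smallest equivalence relation containing `∼`. -/
def Rrel (G : Semigroupoid S) : S → S → Prop := Relation.EqvGen (simRel G)

/-- `₍ρₛ₎X = ⋃ ({ₜX : t R s} ∪ {X_t : t ∈ S^s})`. -/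
def rhoDom (G : Semigroupoid S) (dom : S → Set X) (act : S → X → X) (s : S) : Set X :=
  {x | (∃ t : S, Rrel G t s ∧ x ∈ dom t) ∨ (∃ t : S, G.comp s t ∧ x ∈ img dom act t)}

/-- The set `D ⊆ S^δ × X`, where `S^δ = S ∪ {δ}` is encoded as `Option S`
(with `none` playing the role of the extra symbol `δ`). -/
def DSet (G : Semigroupoid S) (dom : S → Set X) (act : S → X → X) : Set (Option S × X) :=
  {p | ∀ s : S, p.1 = some s → p.2 ∈ rhoDom G dom act s}

theorem noneMem (G : Semigroupoid S) (dom : S → Set X) (act : S → X → X) (x : X) :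
    ((none : Option S), x) ∈ DSet G dom act := by
  intro s h
  cases h

/-- Generating relation for `≈`:
(1) `(δ, α_s x) ∼ (s, x)` for `x ∈ ₛX`;
(2) `(tu, x) ∼ (t, α_u x)` for `u ∈ S^t` and `x ∈ ᵤX`. -/
def preRel (G : Semigroupoid S) (dom : S → Set X) (act : S → X → X) :
    Option S × X → Option S × X → Prop := fun p q =>
  (∃ (s : S) (x : X), x ∈ dom s ∧ p = (none, act s x) ∧ q = (some s, x)) ∨
  (∃ (t u : S) (x : X), G.comp t u ∧ x ∈ dom u ∧
      p = (some (G.mul t u), x) ∧ q = (some t, act u x))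

/-- `≈`: the smallest equivalence relation containing the generating relation. -/
def approx (G : Semigroupoid S) (dom : S → Set X) (act : S → X → X) :
    Option S × X → Option S × X → Prop :=
  Relation.EqvGen (preRel G dom act)

/-- The setoid on `D` induced by `≈`. -/
def DSetoid (G : Semigroupoid S) (dom : S → Set X) (act : S → X → X) :
    Setoid (DSet G dom act) :=
  Setoid.comap Subtype.val (Relation.EqvGen.setoid (preRel G dom act))

/-- `E = D/≈`. -/
def EType (G : Semigroupoid S) (dom : S → Set X) (act : S → X → X) : Type _ :=
  Quotient (DSetoid G dom act)

/-- The class `[a,x] ∈ E` of `(a,x) ∈ D`. -/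
def mkE (G : Semigroupoid S) (dom : S → Set X) (act : S → X → X)
    (p : DSet G dom act) : EType G dom act :=
  Quotient.mk (DSetoid G dom act) p

/-- `ₛE = {[a,x] : (a,x) ≈ (t,y) for some t ∈ S^s} ∪ {[δ,x] : x ∈ ₍ρₛ₎X}`. -/
def domE (G : Semigroupoid S) (dom : S → Set X) (act : S → X → X) (s : S) :
    Set (EType G dom act) :=
  {e | (∃ (p : DSet G dom act) (t : S) (y : X),
          G.comp s t ∧ approx G dom act p.val (some t, y) ∧ e = mkE G dom act p) ∨
       (∃ x : X, x ∈ rhoDom G dom act s ∧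
          e = mkE G dom act ⟨(none, x), noneMem G dom act x⟩)}

/-- `δ : X → E`, `x ↦ [δ,x]`. -/
def deltaMap (G : Semigroupoid S) (dom : S → Set X) (act : S → X → X) (x : X) :
    EType G dom act :=
  mkE G dom act ⟨(none, x), noneMem G dom act x⟩

end Semigroupoid

namespace Semigroupoid

variable {S : Type u} {Y : Type v} {G : Semigroupoid S} {dom : S → Set Y} {act : S → Y → Y}

def restrictDom (dom : S → Set Y) (act : S → Y → Y) (X : Set Y) (s : S) : Set Y :=
  {y | y ∈ X ∧ y ∈ dom s ∧ act s y ∈ X}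

theorem P1.act_mem_dom_iff (h : P1 G dom act) {s t : S} (hst : G.comp s t) {y : Y}
    (hy : y ∈ dom t) : act t y ∈ dom s ↔ y ∈ dom (G.mul s t) := by
  -- `act t y ∈ img dom act t` holds automatically, so (P1) at `y` is exactly this equivalence.
  have h' := Set.ext_iff.mp (h s t hst) y
  simp only [img, Set.mem_ofPred_eq, Set.mem_inter_iff, Set.mem_image] at h'
  exact ⟨fun hs => (h'.mp ⟨hy, hs, y, hy, rfl⟩).2, fun hmul => (h'.mpr ⟨hy, hmul⟩).2.1⟩

theorem P1.restrict (h1 : P1 G dom act) (h2 : P2 G dom act) (X : Set Y) :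
    P1 G (restrictDom dom act X) act := by
  intro s t hst
  ext y
  simp only [restrictDom, img, Set.mem_ofPred_eq, Set.mem_inter_iff, Set.mem_image]
  constructor
  · rintro ⟨hyt, ⟨-, hs, hsX⟩, -⟩
    have hmul := (h1.act_mem_dom_iff hst hyt.2.1).mp hs
    exact ⟨hyt, hyt.1, hmul, h2 s t hst y ⟨hyt.2.1, hmul⟩ ▸ hsX⟩
  · rintro ⟨hyt, -, hmul, hmulX⟩
    have hy := hyt.2.1
    exact ⟨hyt, ⟨hyt.2.2, (h1.act_mem_dom_iff hst hy).mpr hmul,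
      (h2 s t hst y ⟨hy, hmul⟩).symm ▸ hmulX⟩, y, hyt, rfl⟩

theorem P2.restrict (h : P2 G dom act) (X : Set Y) : P2 G (restrictDom dom act X) act :=
  fun s t hst y hy => h s t hst y ⟨hy.1.2.1, hy.2.2.1⟩

theorem IsPartialAction.restrict (h : IsPartialAction G dom act) (X : Set Y) :
    IsPartialAction G (restrictDom dom act X) act :=
  ⟨h.1.restrict h.2 X, h.2.restrict X⟩

end Semigroupoid

open Semigroupoid in
/-- The restriction of a global action `(β,Y)` to a subset `X ⊆ Y`, with
`ₛX = {x ∈ X ∩ ₛY : β_s(x) ∈ X}` and `α_s = β_s|ₛX`, is a partial action of `S` on `X`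
(in particular each `α_s` maps `ₛX` into `X`). -/
theorem statement3 {S : Type u} {Y : Type v} (G : Semigroupoid S)
    (domY : S → Set Y) (act : S → Y → Y)
    (hβ : IsGlobalAction G domY act) (X : Set Y) :
    IsPartialAction G (fun s => {y | y ∈ X ∧ y ∈ domY s ∧ act s y ∈ X}) act ∧
    ∀ s : S, ∀ y ∈ {y | y ∈ X ∧ y ∈ domY s ∧ act s y ∈ X}, act s y ∈ X :=
  ⟨hβ.1.restrict X, fun _ _ hy => hy.2.2⟩
end

section
/- Let S be a semigroupoid, (α,X) a partial action of S, and D the set associated to (α,X) as in the construction of the universal globalization. If (t,y) ∈ D with t ∈ S and (s,t) ∈ S⁽²⁾, then (st,y) ∈ D. -/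
universe u v w

namespace Semigroupoid

variable {S : Type u} {X : Type v}

theorem Rrel_mul_left (G : Semigroupoid S) {s t : S} (hst : G.comp s t) :
    Rrel G t (G.mul s t) :=
  Relation.EqvGen.symm _ _ (Relation.EqvGen.rel _ _ (Or.inr (Or.inr ⟨s, hst, rfl⟩)))

theorem rhoDom_subset_rhoDom_mul (G : Semigroupoid S) (dom : S → Set X) (act : S → X → X)
    {s t : S} (hst : G.comp s t) : rhoDom G dom act t ⊆ rhoDom G dom act (G.mul s t) := by
  rintro y (⟨r, hrt, hyr⟩ | ⟨r, htr, hyr⟩)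
  · exact Or.inl ⟨r, Relation.EqvGen.trans _ _ _ hrt (Rrel_mul_left G hst), hyr⟩
  · exact Or.inr ⟨r, (G.assoc s t r (Or.inl ⟨hst, htr⟩)).2.2.1, hyr⟩

end Semigroupoid

open Semigroupoid in
theorem statement10_general {S : Type u} {X : Type v} (G : Semigroupoid S)
    (dom : S → Set X) (act : S → X → X)
    (s t : S) (y : X) (hD : ((some t : Option S), y) ∈ DSet G dom act)
    (hst : G.comp s t) :
    ((some (G.mul s t) : Option S), y) ∈ DSet G dom act := by
  rintro u ⟨⟩
  exact rhoDom_subset_rhoDom_mul G dom act hst (hD t rfl)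

open Semigroupoid in
/-- If `(t,y) ∈ D` with `t ∈ S` and `(s,t) ∈ S⁽²⁾`, then `(st,y) ∈ D`. -/
theorem statement10 {S : Type u} {X : Type v} (G : Semigroupoid S)
    (dom : S → Set X) (act : S → X → X) (hα : IsPartialAction G dom act)
    (s t : S) (y : X) (hD : ((some t : Option S), y) ∈ DSet G dom act)
    (hst : G.comp s t) :
    ((some (G.mul s t) : Option S), y) ∈ DSet G dom act :=
  statement10_general G dom act s t y hD hst
end
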